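/- Let p ∈ (0,1) and let D_p be the depolarizing channel on M_d(ℂ). Then for all density matrices ρ, σ on ℂ^d: D(D_p(ρ)‖D_p(σ)) ≤ ((1−p)² / (1 − ((d−1)/d)p)) · D(ρ‖σ) (an inequality in [0,∞]). In particular the strong data processing (contraction) coefficient of D_p for relative entropy is at most (1−p)²/(1 − ((d−1)/d)p), which is strictly less than 1−p. -/

import Mathlib

open scoped Matrix ENNReal ComplexOrder

noncomputable section

namespace RDPI

/-- A density matrix: positive semidefinite with trace one. -/
def IsDensity {d : ℕ} (ρ : Matrix (Fin d) (Fin d) ℂ) : Prop :=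
  ρ.PosSemidef ∧ ρ.trace = 1

/-- The support (column space / range) of a matrix. -/
def supp {d : ℕ} (ρ : Matrix (Fin d) (Fin d) ℂ) : Submodule ℂ (Fin d → ℂ) :=
  LinearMap.range ρ.mulVecLin

/-- The Choi matrix `∑ᵢⱼ Eᵢⱼ ⊗ N(Eᵢⱼ)` of a linear map between matrix algebras. -/
def choi {dA dB : ℕ} (N : Matrix (Fin dA) (Fin dA) ℂ →ₗ[ℂ] Matrix (Fin dB) (Fin dB) ℂ) :
    Matrix (Fin dA × Fin dB) (Fin dA × Fin dB) ℂ :=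
  fun p q => N (Matrix.single p.1 q.1 1) p.2 q.2

/-- A quantum channel: completely positive (PSD Choi matrix) and trace preserving. -/
def IsQChannel {dA dB : ℕ}
    (N : Matrix (Fin dA) (Fin dA) ℂ →ₗ[ℂ] Matrix (Fin dB) (Fin dB) ℂ) : Prop :=
  (choi N).PosSemidef ∧ ∀ ρ, (N ρ).trace = ρ.trace

/-- Functional-calculus logarithm of a Hermitian matrix, taken on its support
(recall `Real.log 0 = 0`). Junk value `0` for non-Hermitian inputs. -/
def matLog {d : ℕ} (A : Matrix (Fin d) (Fin d) ℂ) : Matrix (Fin d) (Fin d) ℂ :=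
  if hA : A.IsHermitian then
    (hA.eigenvectorUnitary : Matrix (Fin d) (Fin d) ℂ) *
      Matrix.diagonal (fun i => (Real.log (hA.eigenvalues i) : ℂ)) *
      star (hA.eigenvectorUnitary : Matrix (Fin d) (Fin d) ℂ)
  else 0

open scoped Classical in
/-- Quantum relative entropy `D(ρ‖σ)`, valued in `[0,∞]`. -/
def relEnt {d : ℕ} (ρ σ : Matrix (Fin d) (Fin d) ℂ) : ℝ≥0∞ :=
  if supp ρ ≤ supp σ then ENNReal.ofReal ((ρ * (matLog ρ - matLog σ)).trace.re) else ⊤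

/-- The BKM metric `g_σ(X) = ∫₀^∞ Tr(X† (σ+r)⁻¹ X (σ+r)⁻¹) dr`, valued in `[0,∞]`. -/
def bkm {d : ℕ} (σ X : Matrix (Fin d) (Fin d) ℂ) : ℝ≥0∞ :=
  ∫⁻ r in Set.Ioi (0 : ℝ),
    ENNReal.ofReal ((Xᴴ * (σ + (r : ℂ) • 1)⁻¹ * X * (σ + (r : ℂ) • 1)⁻¹).trace.re)

/-- The depolarizing channel `D_p(ρ) = (1-p)ρ + (p/d) Tr(ρ) I`. -/
def depol (d : ℕ) (p : ℝ) (ρ : Matrix (Fin d) (Fin d) ℂ) : Matrix (Fin d) (Fin d) ℂ :=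
  ((1 - p : ℝ) : ℂ) • ρ + ((p / d : ℝ) : ℂ) • ρ.trace • (1 : Matrix (Fin d) (Fin d) ℂ)

/-! Diagonalise `ρ = ∑ λᵢ |uᵢ⟩⟨uᵢ|` and `σ = ∑ μⱼ |vⱼ⟩⟨vⱼ|`. With the doubly stochastic overlaps
`Tᵢⱼ = |⟨uᵢ, vⱼ⟩|²`, the relative entropy is `D(ρ‖σ) = ∑ Tᵢⱼ φ(λᵢ, μⱼ)`, where
`φ(a, b) = a log a - a log b - a + b` (`klTerm`). On density matrices `D_p` is the functional
calculus of `x ↦ q x + s` with `q = 1 - p`, `s = p / d`, so it keeps the eigenvectors and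
`D(D_p ρ‖D_p σ) = ∑ Tᵢⱼ φ(q λᵢ + s, q μⱼ + s)`. The theorem thus reduces to the scalar inequality
`φ(q a + s, q b + s) ≤ q² / (q + s) · φ(a, b)` on `[0, 1]²`: for fixed `b` the difference of the two
sides vanishes to first order at `a = b` and is convex in `a ∈ [0, 1]`, its second derivative being
`q² / ((q + s) a) - q² / (q a + s) ≥ 0`. Terms with `μⱼ = 0 < Tᵢⱼ` have `λᵢ = 0` as soon as
`supp ρ ⊆ supp σ`, and otherwise `D(ρ‖σ) = ∞`. -/

open scoped InnerProductSpace
open Real Set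

lemma _root_.ConvexOn.isMinOn_of_hasDerivAt_eq_zero {S : Set ℝ} {f : ℝ → ℝ} {x : ℝ}
    (hf : ConvexOn ℝ S f) (hx : x ∈ S) (hf' : HasDerivAt f 0 x) : IsMinOn f S x := by
  refine isMinOn_iff.2 fun y hy => ?_
  rcases lt_trichotomy x y with hxy | rfl | hyx
  · have := hf.le_slope_of_hasDerivAt hx hy hxy hf'
    rw [slope_def_field, le_div_iff₀ (sub_pos.2 hxy)] at this
    linarith
  · exact le_rfl
  · have := hf.slope_le_of_hasDerivAt hy hx hyx hf'
    rw [slope_def_field, div_le_iff₀ (sub_pos.2 hyx)] at this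
    linarith

def klTerm (a b : ℝ) : ℝ := a * log a - a * log b - a + b

@[simp] lemma klTerm_self (a : ℝ) : klTerm a a = 0 := by simp [klTerm]

lemma continuous_klTerm_left (b : ℝ) : Continuous fun a => klTerm a b :=
  ((continuous_mul_log.sub (continuous_id.mul continuous_const)).sub continuous_id).add
    continuous_const

lemma hasDerivAt_klTerm_left {a : ℝ} (b : ℝ) (ha : a ≠ 0) :
    HasDerivAt (fun x => klTerm x b) (log a - log b) a :=
  ((((hasDerivAt_mul_log ha).sub ((hasDerivAt_id a).mul_const (log b))).sub
    (hasDerivAt_id a)).add_const b).congr_deriv (by ring)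

section AffineContraction

variable {q s : ℝ} (hq : 0 < q) (hs : 0 < s)
include hq hs

lemma hasDerivAt_klTerm_affine_gap (b : ℝ) {x : ℝ} (hx : 0 < x) :
    HasDerivAt (fun x => q ^ 2 / (q + s) * klTerm x b - klTerm (q * x + s) (q * b + s))
      (q ^ 2 / (q + s) * (log x - log b) - q * (log (q * x + s) - log (q * b + s))) x := by
  refine (((hasDerivAt_klTerm_left b hx.ne').const_mul _).sub
    ((hasDerivAt_klTerm_left (q * b + s) (by positivity : q * x + s ≠ 0)).comp x
      (((hasDerivAt_id x).const_mul q).add_const s))).congr_deriv ?_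
  ring

lemma convexOn_klTerm_affine_gap (b : ℝ) :
    ConvexOn ℝ (Icc 0 1) fun x =>
      q ^ 2 / (q + s) * klTerm x b - klTerm (q * x + s) (q * b + s) := by
  set c := q ^ 2 / (q + s)
  have hderiv2 (x : ℝ) (hx : 0 < x) :
      HasDerivAt (fun x => c * (log x - log b) - q * (log (q * x + s) - log (q * b + s)))
        (c / x - q ^ 2 / (q * x + s)) x := by
    refine ((((hasDerivAt_log hx.ne').sub_const (log b)).const_mul c).sub
      ((((((hasDerivAt_id x).const_mul q).add_const s).log (by positivity)).sub_const
        (log (q * b + s))).const_mul q)).congr_deriv ?_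
    simp only [id]
    field_simp
  refine convexOn_of_hasDerivWithinAt2_nonneg (convex_Icc 0 1)
    (f' := fun x => c * (log x - log b) - q * (log (q * x + s) - log (q * b + s)))
    (f'' := fun x => c / x - q ^ 2 / (q * x + s))
    ((continuous_const.mul (continuous_klTerm_left b)).sub
      ((continuous_klTerm_left _).comp (by fun_prop))).continuousOn ?_ ?_ ?_
  · rw [interior_Icc]
    exact fun x hx => (hasDerivAt_klTerm_affine_gap hq hs b hx.1).hasDerivWithinAt
  · rw [interior_Icc]
    exact fun x hx => (hderiv2 x hx.1).hasDerivWithinAt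
  · rw [interior_Icc]
    rintro x ⟨hx0, hx1⟩
    have hle : (q + s) * x ≤ q * x + s := by nlinarith
    rw [sub_nonneg, div_div]
    exact div_le_div_of_nonneg_left (by positivity) (by positivity) hle

lemma klTerm_affine_le {a b : ℝ} (ha : a ∈ Icc (0 : ℝ) 1) (hb : b ∈ Icc (0 : ℝ) 1)
    (hab : b = 0 → a = 0) :
    klTerm (q * a + s) (q * b + s) ≤ q ^ 2 / (q + s) * klTerm a b := by
  rcases hb.1.eq_or_lt with rfl | hb0
  · simp [hab rfl]
  have hmin := (convexOn_klTerm_affine_gap hq hs b).isMinOn_of_hasDerivAt_eq_zero hb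
    (by simpa using hasDerivAt_klTerm_affine_gap hq hs b hb0)
  have := isMinOn_iff.1 hmin a ha
  simp only [klTerm_self, mul_zero, sub_zero] at this
  linarith

lemma sum_mul_klTerm_affine_le {n : Type*} [Fintype n] {T : n → n → ℝ} (hT : ∀ i j, 0 ≤ T i j)
    {x y : n → ℝ} (hx : ∀ i, x i ∈ Icc (0 : ℝ) 1) (hy : ∀ j, y j ∈ Icc (0 : ℝ) 1)
    (hxy : ∀ i j, T i j ≠ 0 → y j = 0 → x i = 0) :
    ∑ i, ∑ j, T i j * klTerm (q * x i + s) (q * y j + s) ≤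
      q ^ 2 / (q + s) * ∑ i, ∑ j, T i j * klTerm (x i) (y j) := by
  simp only [Finset.mul_sum, mul_left_comm (q ^ 2 / (q + s))]
  refine Finset.sum_le_sum fun i _ => Finset.sum_le_sum fun j _ => ?_
  rcases eq_or_ne (T i j) 0 with hTij | hTij
  · simp [hTij]
  · exact mul_le_mul_of_nonneg_left (klTerm_affine_le hq hs (hx i) (hy j) (hxy i j hTij)) (hT i j)

end AffineContraction

lemma sum_mul_klTerm_eq {n : Type*} [Fintype n] {T : n → n → ℝ} (hrow : ∀ i, ∑ j, T i j = 1)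
    (hcol : ∀ j, ∑ i, T i j = 1) {x y : n → ℝ} (hxy : ∑ i, x i = ∑ j, y j) :
    ∑ i, ∑ j, T i j * klTerm (x i) (y j) =
      ∑ i, ∑ j, x i * log (x i) * T i j - ∑ i, ∑ j, x i * log (y j) * T i j := by
  have hlin : ∑ i, ∑ j, T i j * (y j - x i) = 0 := by
    simp only [mul_sub, Finset.sum_sub_distrib, ← Finset.sum_mul, hrow, one_mul]
    rw [Finset.sum_comm]
    simp only [← Finset.sum_mul, hcol, one_mul, hxy, sub_self]
  calc ∑ i, ∑ j, T i j * klTerm (x i) (y j)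
      = ∑ i, ∑ j, (x i * log (x i) * T i j - x i * log (y j) * T i j +
          T i j * (y j - x i)) := by
        simp only [klTerm]
        exact Finset.sum_congr rfl fun i _ => Finset.sum_congr rfl fun j _ => by ring
    _ = _ := by simp only [Finset.sum_add_distrib, Finset.sum_sub_distrib, hlin, add_zero]

section Overlap

variable {n : Type*} [Fintype n] [DecidableEq n] {A B : Matrix n n ℂ}

lemma trace_conj_diagonal_mul_conj_diagonal (U V : Matrix n n ℂ) (x y : n → ℂ) :
    (U * Matrix.diagonal x * star U * (V * Matrix.diagonal y * star V)).trace =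
      ∑ i, ∑ j, x i * y j * ((star U * V) i j * star ((star U * V) i j)) := by
  have hcycle : (U * Matrix.diagonal x * star U * (V * Matrix.diagonal y * star V)).trace =
      (Matrix.diagonal x * (star U * V) * (Matrix.diagonal y * star (star U * V))).trace := by
    simp only [Matrix.mul_assoc]
    rw [Matrix.trace_mul_comm U]
    simp only [star_mul, star_star, Matrix.mul_assoc]
  rw [hcycle]
  generalize star U * V = W
  simp only [Matrix.trace, Matrix.diag_apply, Matrix.mul_apply, Matrix.diagonal_apply, ite_mul,
    zero_mul, Finset.sum_ite_eq, Finset.mem_univ, if_true, Matrix.star_apply]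
  exact Finset.sum_congr rfl fun i _ => Finset.sum_congr rfl fun j _ => by ring

def overlap (hA : A.IsHermitian) (hB : B.IsHermitian) (i j : n) : ℝ :=
  ‖⟪hA.eigenvectorBasis i, hB.eigenvectorBasis j⟫_ℂ‖ ^ 2

variable (hA : A.IsHermitian) (hB : B.IsHermitian)

lemma overlap_nonneg (i j : n) : 0 ≤ overlap hA hB i j := by
  unfold overlap; positivity

lemma sum_overlap_right (i : n) : ∑ j, overlap hA hB i j = 1 := by
  simp [overlap, OrthonormalBasis.sum_sq_norm_inner_left]

lemma sum_overlap_left (j : n) : ∑ i, overlap hA hB i j = 1 := by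
  simp [overlap, OrthonormalBasis.sum_sq_norm_inner_right]

lemma star_eigenvectorUnitary_mul_apply (i j : n) :
    (star (hA.eigenvectorUnitary : Matrix n n ℂ) * hB.eigenvectorUnitary) i j =
      ⟪hA.eigenvectorBasis i, hB.eigenvectorBasis j⟫_ℂ := by
  simp [Matrix.mul_apply, EuclideanSpace.inner_eq_star_dotProduct, dotProduct, mul_comm]

lemma trace_cfc_mul_cfc (f g : ℝ → ℝ) :
    (cfc f A * cfc g B).trace =
      ((∑ i, ∑ j, f (hA.eigenvalues i) * g (hB.eigenvalues j) * overlap hA hB i j : ℝ) : ℂ) := by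
  rw [hA.cfc_eq, hB.cfc_eq, Matrix.IsHermitian.cfc, Matrix.IsHermitian.cfc,
    Unitary.conjStarAlgAut_apply, Unitary.conjStarAlgAut_apply,
    trace_conj_diagonal_mul_conj_diagonal]
  push_cast
  simp only [overlap, ← star_eigenvectorUnitary_mul_apply, RCLike.star_def, Complex.mul_conj',
    Function.comp_apply]
  push_cast
  rfl

end Overlap

section RelativeEntropy

variable {d : ℕ}

lemma matLog_eq_cfc {A : Matrix (Fin d) (Fin d) ℂ} (hA : A.IsHermitian) :
    matLog A = cfc Real.log A := by
  rw [matLog, dif_pos hA, hA.cfc_eq]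
  rfl

lemma matLog_cfc {A : Matrix (Fin d) (Fin d) ℂ} (hA : A.IsHermitian) (f : ℝ → ℝ) :
    matLog (cfc f A) = cfc (Real.log ∘ f) A := by
  have hfin := A.finite_real_spectrum
  rw [matLog_eq_cfc (cfc_predicate f A).isHermitian]
  exact (cfc_comp Real.log f A hA ((hfin.image f).continuousOn _) (hfin.continuousOn _)).symm

lemma re_trace_cfc_mul_sub_matLog {A B : Matrix (Fin d) (Fin d) ℂ} (hA : A.IsHermitian)
    (hB : B.IsHermitian) (f : ℝ → ℝ)
    (hf : ∑ i, f (hA.eigenvalues i) = ∑ j, f (hB.eigenvalues j)) :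
    (cfc f A * (matLog (cfc f A) - matLog (cfc f B))).trace.re =
      ∑ i, ∑ j, overlap hA hB i j * klTerm (f (hA.eigenvalues i)) (f (hB.eigenvalues j)) := by
  have hcont (g : ℝ → ℝ) : ContinuousOn g (spectrum ℝ A) := A.finite_real_spectrum.continuousOn _
  -- writing `Tr (cfc h A)` as `Tr (cfc h A * cfc 1 B)` brings both traces to `trace_cfc_mul_cfc`
  rw [matLog_cfc hA, matLog_cfc hB, Matrix.mul_sub, Matrix.trace_sub,
    ← cfc_mul f _ A (hcont _) (hcont _), ← mul_one (cfc _ A), ← cfc_const_one ℝ B,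
    trace_cfc_mul_cfc hA hB, trace_cfc_mul_cfc hA hB,
    sum_mul_klTerm_eq (sum_overlap_right hA hB) (sum_overlap_left hA hB) hf]
  simp only [Complex.sub_re, Complex.ofReal_re, Function.comp_apply, mul_one]

lemma depol_eq_cfc {p : ℝ} {ρ : Matrix (Fin d) (Fin d) ℂ} (hρ : ρ.IsHermitian)
    (htr : ρ.trace = 1) : depol d p ρ = cfc (fun x => (1 - p) * x + p / d) ρ := by
  rw [cfc_add .., cfc_const_mul .., cfc_id' .., cfc_const .., depol, htr, one_smul,
    Algebra.algebraMap_eq_smul_one, ← Complex.coe_smul, ← Complex.coe_smul]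

lemma IsDensity.dim_pos {ρ : Matrix (Fin d) (Fin d) ℂ} (hρ : IsDensity ρ) : 0 < d := by
  rcases Nat.eq_zero_or_pos d with rfl | hd
  · simpa [Matrix.trace] using hρ.2
  · exact hd

lemma IsDensity.sum_eigenvalues {ρ : Matrix (Fin d) (Fin d) ℂ} (hρ : IsDensity ρ) :
    ∑ i, hρ.1.isHermitian.eigenvalues i = 1 := by
  have h := hρ.1.isHermitian.trace_eq_sum_eigenvalues.symm.trans hρ.2
  rw [← RCLike.ofReal_sum] at h
  exact RCLike.ofReal_inj.1 (h.trans RCLike.ofReal_one.symm)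

lemma IsDensity.eigenvalues_mem_Icc {ρ : Matrix (Fin d) (Fin d) ℂ} (hρ : IsDensity ρ)
    (i : Fin d) : hρ.1.isHermitian.eigenvalues i ∈ Icc (0 : ℝ) 1 :=
  ⟨hρ.1.eigenvalues_nonneg i, hρ.sum_eigenvalues ▸
    Finset.single_le_sum (fun j _ => hρ.1.eigenvalues_nonneg j) (Finset.mem_univ i)⟩

lemma posDef_depol {p : ℝ} (hp0 : 0 < p) (hp1 : p < 1) {ρ : Matrix (Fin d) (Fin d) ℂ}
    (hρ : IsDensity ρ) : (depol d p ρ).PosDef := by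
  have hd : (0 : ℝ) < d := by exact_mod_cast hρ.dim_pos
  rw [depol, hρ.2, one_smul]
  exact Matrix.PosDef.posSemidef_add (hρ.1.smul (Complex.zero_le_real.2 (by linarith)))
    (Matrix.PosDef.one.smul (Complex.zero_lt_real.2 (by positivity)))

lemma supp_eq_top_of_posDef {A : Matrix (Fin d) (Fin d) ℂ} (hA : A.PosDef) : supp A = ⊤ :=
  LinearMap.range_eq_top.2 (Matrix.mulVec_surjective_iff_isUnit.2 hA.isUnit)

lemma mulVec_eq_zero_of_supp_le {ρ σ : Matrix (Fin d) (Fin d) ℂ} (hρ : ρ.PosSemidef)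
    (hσ : σ.IsHermitian) (hsupp : supp ρ ≤ supp σ) {x : Fin d → ℂ} (hx : σ *ᵥ x = 0) :
    ρ *ᵥ x = 0 := by
  obtain ⟨w, hw⟩ := hsupp ⟨x, rfl⟩
  rw [Matrix.mulVecLin_apply, Matrix.mulVecLin_apply] at hw
  refine (hρ.dotProduct_mulVec_zero_iff x).1 ?_
  rw [← hw, Matrix.dotProduct_mulVec, ← hσ.eq, ← Matrix.star_mulVec, hx, star_zero,
    zero_dotProduct]

lemma eigenvalues_eq_zero_of_supp_le {ρ σ : Matrix (Fin d) (Fin d) ℂ} (hρ : ρ.PosSemidef)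
    (hσ : σ.IsHermitian) (hsupp : supp ρ ≤ supp σ) {i j : Fin d}
    (hij : overlap hρ.isHermitian hσ i j ≠ 0) (hj : hσ.eigenvalues j = 0) :
    hρ.isHermitian.eigenvalues i = 0 := by
  set u := hρ.isHermitian.eigenvectorBasis i
  set v := hσ.eigenvectorBasis j
  have hρv : ρ *ᵥ v = 0 := mulVec_eq_zero_of_supp_le hρ hσ hsupp <| by
    rw [hσ.mulVec_eigenvectorBasis, hj, zero_smul]
  have key : (hρ.isHermitian.eigenvalues i : ℂ) * ⟪u, v⟫_ℂ = 0 :=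
    calc (hρ.isHermitian.eigenvalues i : ℂ) * ⟪u, v⟫_ℂ = star (ρ *ᵥ u) ⬝ᵥ v := by
          rw [hρ.isHermitian.mulVec_eigenvectorBasis, star_smul, smul_dotProduct,
            EuclideanSpace.inner_eq_star_dotProduct, dotProduct_comm, Complex.real_smul,
            star_trivial (hρ.isHermitian.eigenvalues i)]
      _ = star u ⬝ᵥ (ρ *ᵥ v) := by
          rw [Matrix.star_mulVec, ← Matrix.dotProduct_mulVec, hρ.isHermitian.eq]
      _ = 0 := by rw [hρv, dotProduct_zero]
  have hinner : ⟪u, v⟫_ℂ ≠ 0 := fun h => hij (by simp [overlap, u, v, h])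
  exact_mod_cast (mul_eq_zero.1 key).resolve_right hinner

lemma relEnt_depol_le {p : ℝ} (hp0 : 0 < p) (hp1 : p < 1) {ρ σ : Matrix (Fin d) (Fin d) ℂ}
    (hρ : IsDensity ρ) (hσ : IsDensity σ) :
    relEnt (depol d p ρ) (depol d p σ) ≤
      ENNReal.ofReal ((1 - p) ^ 2 / (1 - p + p / d)) * relEnt ρ σ := by
  have hd : (0 : ℝ) < d := by exact_mod_cast hρ.dim_pos
  have hq : 0 < 1 - p := by linarith
  have hρH := hρ.1.isHermitian
  have hσH := hσ.1.isHermitian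
  set f : ℝ → ℝ := fun x => (1 - p) * x + p / d
  have hf : ∑ i, f (hρH.eigenvalues i) = ∑ j, f (hσH.eigenvalues j) := by
    simp only [f, Finset.sum_add_distrib, ← Finset.mul_sum, hρ.sum_eigenvalues,
      hσ.sum_eigenvalues]
  have hdepol : relEnt (depol d p ρ) (depol d p σ) = ENNReal.ofReal
      (∑ i, ∑ j, overlap hρH hσH i j * klTerm (f (hρH.eigenvalues i)) (f (hσH.eigenvalues j))) := by
    rw [relEnt, if_pos ((supp_eq_top_of_posDef (posDef_depol hp0 hp1 hσ)).symm ▸ le_top),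
      depol_eq_cfc hρH hρ.2, depol_eq_cfc hσH hσ.2, re_trace_cfc_mul_sub_matLog hρH hσH f hf]
  rw [hdepol]
  by_cases hsupp : supp ρ ≤ supp σ
  · have hrel : relEnt ρ σ = ENNReal.ofReal
        (∑ i, ∑ j, overlap hρH hσH i j * klTerm (hρH.eigenvalues i) (hσH.eigenvalues j)) := by
      have := re_trace_cfc_mul_sub_matLog hρH hσH id
        (hρ.sum_eigenvalues.trans hσ.sum_eigenvalues.symm)
      rw [cfc_id ℝ ρ, cfc_id ℝ σ] at this
      rw [relEnt, if_pos hsupp, this]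
      rfl
    rw [hrel, ← ENNReal.ofReal_mul (by positivity)]
    exact ENNReal.ofReal_le_ofReal <| sum_mul_klTerm_affine_le hq (by positivity)
      (overlap_nonneg hρH hσH) hρ.eigenvalues_mem_Icc hσ.eigenvalues_mem_Icc
      fun i j hij hj => eigenvalues_eq_zero_of_supp_le hρ.1 hσH hsupp hij hj
  · rw [relEnt, if_neg hsupp, ENNReal.mul_top (ENNReal.ofReal_pos.2 (by positivity)).ne']
    exact le_top

end RelativeEntropy

theorem depolarizing_sdpi_general {d : ℕ} {p : ℝ} (hp0 : 0 < p) (hp1 : p < 1) :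
    (∀ ρ σ : Matrix (Fin d) (Fin d) ℂ, IsDensity ρ → IsDensity σ →
      relEnt (depol d p ρ) (depol d p σ) ≤
        ENNReal.ofReal ((1 - p)^2 / (1 - ((d - 1 : ℝ)/d) * p)) * relEnt ρ σ) ∧
    (1 - p)^2 / (1 - ((d - 1 : ℝ)/d) * p) < 1 - p := by
  refine ⟨fun ρ σ hρ hσ => ?_, ?_⟩
  · have hd : (d : ℝ) ≠ 0 := by exact_mod_cast hρ.dim_pos.ne'
    rw [show 1 - ((d - 1 : ℝ) / d) * p = 1 - p + p / d by field_simp; ring]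
    exact relEnt_depol_le hp0 hp1 hρ hσ
  · have hfrac : (d - 1 : ℝ) / d < 1 := by
      rcases Nat.eq_zero_or_pos d with rfl | hd
      · simp
      · rw [div_lt_one (by exact_mod_cast hd)]
        linarith
    have hlt : 1 - p < 1 - ((d - 1 : ℝ) / d) * p := by nlinarith
    rw [div_lt_iff₀ (by linarith), sq]
    exact mul_lt_mul_of_pos_left hlt (by linarith)

/-- strong data processing inequality for the depolarizing channel, with
contraction coefficient at most `(1-p)²/(1-((d-1)/d)p) < 1-p`. -/
theorem depolarizing_sdpi {d : ℕ} (hd : 0 < d) {p : ℝ} (hp0 : 0 < p) (hp1 : p < 1) :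
    (∀ ρ σ : Matrix (Fin d) (Fin d) ℂ, IsDensity ρ → IsDensity σ →
      relEnt (depol d p ρ) (depol d p σ) ≤
        ENNReal.ofReal ((1 - p)^2 / (1 - ((d - 1 : ℝ)/d) * p)) * relEnt ρ σ) ∧
    (1 - p)^2 / (1 - ((d - 1 : ℝ)/d) * p) < 1 - p :=
  depolarizing_sdpi_general hp0 hp1

end RDPI
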